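/- arXiv:math-ph/0203058 — 3 statements merged into one kernel-verified Lean document; each statement's English description precedes it below -/
import Mathlib

section
/- Let $E = \bigcup_{k=1}^l [a_{2k-1}, a_{2k}]$ with $a_1 < \dots < a_{2l}$ and let $w$ be a positive integrable weight on $E$. If $p_n$ is the monic polynomial of degree $n$ orthogonal to all polynomials of degree less than $n$ with respect to $w$, then $p_n$ has at most one zero in each gap $[a_{2j}, a_{2j+1}]$, $j = 1, \dots, l-1$. -/
open Polynomial Set Filter MeasureTheory

-- monotonicity helper
private lemma amono_aux (l : ℕ) (a : ℕ → ℝ)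
    (ha : ∀ i, 1 ≤ i → i < 2 * l → a i < a (i + 1)) :
    ∀ i' i, 1 ≤ i → i ≤ i' → i' ≤ 2 * l → a i ≤ a i' := by
  intro i'
  induction i' with
  | zero => intro i h1 h2 _; omega
  | succ m ih =>
    intro i h1 h2 h3
    rcases Nat.lt_or_ge i (m + 1) with h | h
    · exact (ih i h1 (by omega) (by omega)).trans (le_of_lt (ha m (by omega) (by omega)))
    · have : i = m + 1 := by omega
      simp [this]

set_option maxHeartbeats 800000 in
theorem at_most_one_zero_in_each_gap
    (l n : ℕ) (hl : 1 ≤ l) (a : ℕ → ℝ)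
    (ha : ∀ i, 1 ≤ i → i < 2 * l → a i < a (i + 1))
    (w : ℝ → ℝ)
    (hw : ∀ x ∈ ⋃ k ∈ Finset.Icc 1 l, Set.Icc (a (2 * k - 1)) (a (2 * k)), 0 < w x)
    (hint : IntegrableOn w (⋃ k ∈ Finset.Icc 1 l, Set.Icc (a (2 * k - 1)) (a (2 * k))))
    (p : Polynomial ℝ) (hmonic : p.Monic) (hdeg : p.natDegree = n)
    (horth : ∀ j < n,
      ∫ x in (⋃ k ∈ Finset.Icc 1 l, Set.Icc (a (2 * k - 1)) (a (2 * k))),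
        x ^ j * p.eval x * w x = 0) :
    ∀ j ∈ Finset.Icc 1 (l - 1),
      {x ∈ Set.Icc (a (2 * j)) (a (2 * j + 1)) | p.eval x = 0}.Subsingleton := by
  intro j hj
  rw [Finset.mem_Icc] at hj
  obtain ⟨hj1, hj2⟩ := hj
  have hl2 : 2 ≤ l := by omega
  set E := ⋃ k ∈ Finset.Icc 1 l, Set.Icc (a (2 * k - 1)) (a (2 * k)) with hEdef
  have hEmeas : MeasurableSet E :=
    (Finset.Icc 1 l).measurableSet_biUnion fun k _ => measurableSet_Icc
  have hEcomp : IsCompact E :=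
    (Finset.Icc 1 l).finite_toSet.isCompact_biUnion fun k _ => isCompact_Icc
  have amono : ∀ i i', 1 ≤ i → i ≤ i' → i' ≤ 2 * l → a i ≤ a i' :=
    fun i i' h1 h2 h3 => amono_aux l a ha i' i h1 h2 h3
  -- integrability of continuous * w on E
  have hintg : ∀ g : ℝ → ℝ, Continuous g → IntegrableOn (fun x => g x * w x) E := by
    intro g hg
    obtain ⟨C, hC⟩ := hEcomp.exists_bound_of_continuousOn hg.continuousOn
    apply Integrable.mono' ((hint.norm).const_mul C)
      (hg.aestronglyMeasurable.restrict.mul hint.aestronglyMeasurable)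
    filter_upwards [ae_restrict_mem hEmeas] with x hx
    show ‖g x * w x‖ ≤ C * ‖w x‖
    rw [norm_mul]
    exact mul_le_mul_of_nonneg_right (hC x hx) (norm_nonneg _)
  -- orthogonality to any polynomial of degree < n
  have horth' : ∀ s : ℝ[X], s.natDegree < n →
      ∫ x in E, s.eval x * p.eval x * w x = 0 := by
    intro s hs
    have heq : (fun x => s.eval x * p.eval x * w x)
        = fun x => ∑ i ∈ Finset.range (s.natDegree + 1),
            s.coeff i * (x ^ i * p.eval x * w x) := by
      funext x
      rw [eval_eq_sum_range, Finset.sum_mul, Finset.sum_mul]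
      exact Finset.sum_congr rfl fun i _ => by ring
    rw [heq, integral_finset_sum]
    · refine Finset.sum_eq_zero fun i hi => ?_
      rw [MeasureTheory.integral_const_mul, horth i (by rw [Finset.mem_range] at hi; omega), mul_zero]
    · intro i _
      have := (hintg (fun x => x ^ i * p.eval x)
        ((continuous_pow i).mul (Polynomial.continuous p))).const_mul (s.coeff i)
      simpa [mul_assoc] using this
  intro x1 hx1 x2 hx2
  by_contra hne
  apply hne
  obtain ⟨hx1I, hx1r⟩ := hx1
  obtain ⟨hx2I, hx2r⟩ := hx2
  -- divisibility
  have hd1 : (X - C x1) ∣ p := dvd_iff_isRoot.mpr hx1r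
  obtain ⟨p1, hp1⟩ := hd1
  have hx2p1 : p1.IsRoot x2 := by
    have : p.eval x2 = (x2 - x1) * p1.eval x2 := by rw [hp1]; simp
    have h2 : (x2 - x1) * p1.eval x2 = 0 := by rw [← this]; exact hx2r
    rcases mul_eq_zero.mp h2 with h | h
    · exact absurd (by linarith) hne
    · exact h
  obtain ⟨r, hr⟩ := dvd_iff_isRoot.mpr hx2p1
  have hp : p = (X - C x1) * ((X - C x2) * r) := by rw [hp1, hr]
  have hpne : p ≠ 0 := hmonic.ne_zero
  have hrne : r ≠ 0 := by
    intro h; rw [h, mul_zero, mul_zero] at hp; exact hpne hp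
  have hXne1 : (X - C x1 : ℝ[X]) ≠ 0 := X_sub_C_ne_zero x1
  have hXne2 : (X - C x2 : ℝ[X]) ≠ 0 := X_sub_C_ne_zero x2
  have hdegr : p.natDegree = 2 + r.natDegree := by
    rw [hp, natDegree_mul hXne1 (mul_ne_zero hXne2 hrne),
      natDegree_mul hXne2 hrne, natDegree_X_sub_C, natDegree_X_sub_C]
    ring
  have hrdeg : r.natDegree < n := by omega
  -- gap position
  have hgap : ∀ x ∈ E, x ≤ a (2 * j) ∨ a (2 * j + 1) ≤ x := by
    intro x hx
    rw [hEdef, Set.mem_iUnion] at hx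
    obtain ⟨k, hk⟩ := hx
    rw [Set.mem_iUnion] at hk
    obtain ⟨hkmem, hxk⟩ := hk
    rw [Finset.mem_Icc] at hkmem
    obtain ⟨hxk1, hxk2⟩ := hxk
    rcases le_or_gt k j with h | h
    · left
      exact hxk2.trans (amono (2 * k) (2 * j) (by omega) (by omega) (by omega))
    · right
      exact (amono (2 * j + 1) (2 * k - 1) (by omega) (by omega) (by omega)).trans hxk1
  -- nonnegativity of q on E
  have hqnn : ∀ x ∈ E, 0 ≤ (x - x1) * (x - x2) := by
    intro x hx
    rcases hgap x hx with h | h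
    · nlinarith [hx1I.1, hx2I.1]
    · exact mul_nonneg (by linarith [hx1I.2]) (by linarith [hx2I.2])
  -- the integral
  have hI0 : ∫ x in E, r.eval x * p.eval x * w x = 0 := horth' r hrdeg
  set f : ℝ → ℝ := fun x => r.eval x * p.eval x * w x with hfdef
  have hfint : IntegrableOn f E := hintg (fun x => r.eval x * p.eval x)
    ((Polynomial.continuous r).mul (Polynomial.continuous p))
  have hfnn : 0 ≤ᵐ[volume.restrict E] f := by
    filter_upwards [ae_restrict_mem hEmeas] with x hx
    have hpe : p.eval x = (x - x1) * ((x - x2) * r.eval x) := by rw [hp]; simp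
    have : f x = (r.eval x) ^ 2 * ((x - x1) * (x - x2)) * w x := by
      simp only [hfdef, hpe]; ring
    rw [Pi.zero_apply, this]
    exact mul_nonneg (mul_nonneg (sq_nonneg _) (hqnn x hx)) (le_of_lt (hw x hx))
  have hfzero : f =ᵐ[volume.restrict E] 0 :=
    (integral_eq_zero_iff_of_nonneg_ae hfnn hfint).mp hI0
  -- so p*r vanishes a.e. on E
  have hnull : volume ({x ∈ E | (p * r).eval x ≠ 0}) = 0 := by
    have h1 : {x ∈ E | (p * r).eval x ≠ 0} ⊆ {x ∈ E | f x ≠ 0} := by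
      intro x hx
      obtain ⟨hxE, hxne⟩ := hx
      refine ⟨hxE, ?_⟩
      show f x ≠ 0
      intro hcon
      apply hxne
      have h0 : r.eval x * p.eval x = 0 :=
        (mul_eq_zero.mp hcon).resolve_right (hw x hxE).ne'
      rw [eval_mul, mul_comm]
      exact h0
    have h2 : volume ({x ∈ E | f x ≠ 0}) = 0 := by
      have := ae_iff.mp hfzero
      rw [Measure.restrict_apply₀'] at this
      · convert this using 2
        ext x
        simp [and_comm]
      · exact hEmeas.nullMeasurableSet
    exact measure_mono_null h1 h2
  have hprne : p * r ≠ 0 := mul_ne_zero hpne hrne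
  have hroots : volume {x : ℝ | (p * r).eval x = 0} = 0 :=
    (Polynomial.finite_setOf_isRoot hprne).measure_zero _
  have hEnull : volume E = 0 := by
    have hsub : E ⊆ {x : ℝ | (p * r).eval x = 0} ∪ {x ∈ E | (p * r).eval x ≠ 0} := by
      intro x hx
      by_cases h : (p * r).eval x = 0
      · exact Or.inl h
      · exact Or.inr ⟨hx, h⟩
    exact measure_mono_null hsub (measure_union_null hroots hnull)
  -- but E has positive measure
  have hsub1 : Set.Icc (a 1) (a 2) ⊆ E := by
    rw [hEdef]
    intro x hx
    rw [Set.mem_iUnion]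
    refine ⟨1, ?_⟩
    rw [Set.mem_iUnion]
    exact ⟨Finset.mem_Icc.mpr ⟨le_refl 1, hl⟩, by simpa using hx⟩
  have ha12 : a 1 < a 2 := ha 1 (le_refl 1) (by omega)
  have hpos : (0:ENNReal) < volume (Set.Icc (a 1) (a 2)) := by
    rw [Real.volume_Icc]
    exact ENNReal.ofReal_pos.mpr (by linarith)
  exact absurd (measure_mono_null hsub1 hEnull) hpos.ne'
end

section
/- Let $x_0 \in (a_{2j_0}, a_{2j_0+1})$ lie in a gap of $E = \bigcup_{k=1}^l [a_{2k-1},a_{2k}]$, where $a_1 < \dots < a_{2l}$ and $H(x) = \prod_j (x - a_j)$. Then there exists a unique real polynomial $r_{x_0}$ of degree at most $l-1$ such that $r_{x_0}(x_0) = -\sqrt{H(x_0)}$ and $\mathrm{p.v.} \int_{a_{2j}}^{a_{2j+1}} \frac{r_{x_0}(\xi)}{\xi - x_0} \frac{d\xi}{\sqrt{H(\xi)}} = 0$ for $j = 1, \dots, l-1$ (the integral over the gap containing $x_0$ taken as a Cauchy principal value). -/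
/-!
Write an admissible `r` as `r = r(x₀) + (X - x₀) q` with `deg q ≤ l - 2`. Since
`r(ξ) / (ξ - x₀) = r(x₀) / (ξ - x₀) + q(ξ)`, once `r(x₀) = -√H(x₀)` is fixed the `l - 1` gap
conditions become a square linear system `∫_{gap j} q / √H = -r(x₀) Cⱼ` for the coefficients of
`q`, where `Cⱼ` is the Cauchy integral of `1 / √H` over gap `j`, a principal value on the gap of
`x₀`. That principal value exists because `1 / √H` is smooth at `x₀`: its difference quotient at
`x₀` is integrable, and what is left, a multiple of `1 / (ξ - x₀)`, integrates to a logarithm.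
The system is injective: `√H > 0` on the gaps, so `∫_{gap j} q / √H = 0` forces a root of `q` in
each of the `l - 1` gaps, too many for `deg q ≤ l - 2`. All integrals converge at the gap ends
because `H` vanishes there only to first order.
-/

open Polynomial Set Filter intervalIntegral

open MeasureTheory Topology

theorem intervalIntegrable_inv_sqrt_sub_add_inv_sqrt_sub {c d : ℝ} (hcd : c ≤ d) :
    IntervalIntegrable (fun x => (√(x - c))⁻¹ + (√(d - x))⁻¹) volume c d := by
  refine intervalIntegrable_deriv_of_nonneg (g := fun x => 2 * √(x - c) - 2 * √(d - x))
    (by fun_prop) (fun x hx => ?_) (fun x _ => by positivity)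
  rw [min_eq_left hcd, max_eq_right hcd] at hx
  refine (((((hasDerivAt_id' x).sub_const c).sqrt (sub_pos.2 hx.1).ne').const_mul 2).sub
    ((((hasDerivAt_id' x).const_sub d).sqrt (sub_pos.2 hx.2).ne').const_mul 2)
    ).congr_deriv ?_
  field_simp
  ring

theorem inv_sqrt_le_of_mul_le {c d x y m : ℝ} (hm : 0 < m) (hx : x ∈ Ioo c d)
    (hy : m * ((x - c) * (d - x)) ≤ y) :
    (√y)⁻¹ ≤ (√(m * (d - c)))⁻¹ * ((√(x - c))⁻¹ + (√(d - x))⁻¹) := by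
  have hu : 0 < √(x - c) := Real.sqrt_pos.2 (sub_pos.2 hx.1)
  have hv : 0 < √(d - x) := Real.sqrt_pos.2 (sub_pos.2 hx.2)
  have hsl : 0 < √(d - c) := Real.sqrt_pos.2 (by linarith [hx.1, hx.2])
  have hlow : √m * (√(x - c) * √(d - x)) ≤ √y := by
    rw [← Real.sqrt_mul (sub_pos.2 hx.1).le, ← Real.sqrt_mul hm.le]
    exact Real.sqrt_le_sqrt hy
  have hlen : √(d - c) ≤ √(x - c) + √(d - x) := by
    rw [Real.sqrt_le_left (by positivity)]
    nlinarith [Real.sq_sqrt (sub_pos.2 hx.1).le, Real.sq_sqrt (sub_pos.2 hx.2).le]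
  calc (√y)⁻¹ ≤ (√m * (√(x - c) * √(d - x)))⁻¹ := inv_anti₀ (by positivity) hlow
    _ ≤ _ := by
      rw [Real.sqrt_mul hm.le]
      field_simp
      linarith

theorem intervalIntegrable_inv_sqrt_of_mul_le {h : ℝ → ℝ} {c d m : ℝ} (hcd : c ≤ d)
    (hh : Continuous h) (hm : 0 < m) (hle : ∀ x ∈ Ioo c d, m * ((x - c) * (d - x)) ≤ h x) :
    IntervalIntegrable (fun x => (√(h x))⁻¹) volume c d := by
  refine ((intervalIntegrable_inv_sqrt_sub_add_inv_sqrt_sub hcd).const_mul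
    (√(m * (d - c)))⁻¹).mono_fun' (by fun_prop) ?_
  rw [uIoc_of_le hcd]
  filter_upwards [ae_restrict_mem measurableSet_Ioc, ae_restrict_of_ae
    (Measure.ae_ne volume d)] with x hx hxd
  rw [Real.norm_of_nonneg (by positivity)]
  have hx' : x ∈ Ioo c d := ⟨hx.1, lt_of_le_of_ne hx.2 hxd⟩
  exact inv_sqrt_le_of_mul_le hm hx' (hle x hx')

theorem exists_mem_Ioo_eq_zero_of_integral_mul_eq_zero {p w : ℝ → ℝ} {c d : ℝ} (hcd : c < d)
    (hp : ContinuousOn p (Ioo c d)) (hw : ∀ x ∈ Ioo c d, 0 < w x)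
    (hint : IntervalIntegrable (fun x => p x * w x) volume c d)
    (h : ∫ x in c..d, p x * w x = 0) : ∃ z ∈ Ioo c d, p z = 0 := by
  by_contra! hne
  by_cases hneg : ∃ x ∈ Ioo c d, p x < 0
  · obtain ⟨x, hx, hpx⟩ := hneg
    have hsign : ∀ y ∈ Ioo c d, p y < 0 := fun y hy => by
      by_contra! hpy
      obtain ⟨z, hz, hpz⟩ := isPreconnected_Ioo.intermediate_value hx hy hp ⟨hpx.le, hpy⟩
      exact hne z hz hpz
    have := intervalIntegral_pos_of_pos_on hint.neg
      (fun y hy => neg_pos.2 (mul_neg_of_neg_of_pos (hsign y hy) (hw y hy))) hcd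
    simp only [Pi.neg_apply, intervalIntegral.integral_neg, h, neg_zero, lt_irrefl] at this
  · simp only [not_exists, not_and, not_lt] at hneg
    have := intervalIntegral_pos_of_pos_on hint
      (fun y hy => mul_pos ((hneg y hy).lt_of_ne' (hne y hy)) (hw y hy)) hcd
    exact this.ne' h

theorem dslope_inv_sqrt {h : ℝ → ℝ} {x0 x : ℝ} (hx : x ≠ x0) (h0 : 0 < h x0) (hpos : 0 < h x) :
    dslope (fun t => (√(h t))⁻¹) x0 x
      = -(dslope h x0 x / (√(h x0) * (√(h x0) + √(h x)))) * (√(h x))⁻¹ := by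
  have hs0 : 0 < √(h x0) := Real.sqrt_pos.2 h0
  have hs : 0 < √(h x) := Real.sqrt_pos.2 hpos
  rw [dslope_of_ne _ hx, dslope_of_ne _ hx, slope_def_field, slope_def_field]
  have e0 := Real.sq_sqrt h0.le
  have e := Real.sq_sqrt hpos.le
  set s0 := √(h x0)
  set s := √(h x)
  rw [← e0, ← e]
  field_simp
  ring

/-- `p.v. ∫_c^d f` is the limit of `pvTrunc f c d x0 ε` as `ε → 0⁺`. -/
noncomputable def pvTrunc (f : ℝ → ℝ) (c d x0 ε : ℝ) : ℝ :=
  (∫ x in c..(x0 - ε), f x) + ∫ x in (x0 + ε)..d, f x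

theorem tendsto_pvTrunc_of_intervalIntegrable {g : ℝ → ℝ} {c d x0 : ℝ}
    (hg : IntervalIntegrable g volume c d) (hc : c < x0) (hd : x0 < d) :
    Tendsto (pvTrunc g c d x0) (𝓝[>] 0) (𝓝 (∫ x in c..d, g x)) := by
  set F := fun t => ∫ x in c..t, g x
  have hF : ContinuousAt F x0 :=
    (continuousOn_primitive_interval' hg left_mem_uIcc).continuousAt
      (by rw [uIcc_of_le (hc.trans hd).le]; exact Icc_mem_nhds hc hd)
  have hlim : Tendsto (fun ε => F (x0 - ε) + (F d - F (x0 + ε))) (𝓝[>] 0)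
      (𝓝 (F x0 + (F d - F x0))) := by
    refine (hF.tendsto.comp ?_).add (tendsto_const_nhds.sub (hF.tendsto.comp ?_))
    · simpa using ((continuous_sub_left x0).tendsto 0).mono_left nhdsWithin_le_nhds
    · simpa using ((continuous_const_add x0).tendsto 0).mono_left nhdsWithin_le_nhds
  rw [add_sub_cancel] at hlim
  refine hlim.congr' ?_
  filter_upwards [Ioo_mem_nhdsGT (sub_pos.2 hd)] with ε ⟨hε, hεd⟩
  have hmem : x0 + ε ∈ uIcc c d := by
    rw [uIcc_of_le (hc.trans hd).le]
    constructor <;> linarith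
  rw [pvTrunc, ← integral_interval_sub_left hg
    (hg.mono_set (uIcc_subset_uIcc left_mem_uIcc hmem))]

theorem pvTrunc_inv_sub {c d x0 ε : ℝ} (hε : 0 < ε) (hεc : ε < x0 - c) (hεd : ε < d - x0) :
    pvTrunc (fun x => (x - x0)⁻¹) c d x0 ε = Real.log ((d - x0) / (x0 - c)) := by
  have hc : c - x0 ≠ 0 := by linarith
  have hc' : x0 - c ≠ 0 := by linarith
  rw [pvTrunc, integral_comp_sub_right (fun x => x⁻¹), integral_comp_sub_right (fun x => x⁻¹),
    sub_sub_cancel_left, add_sub_cancel_left,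
    integral_inv (notMem_uIcc_of_gt (by linarith) (by linarith)),
    integral_inv (notMem_uIcc_of_lt hε (by linarith)),
    ← Real.log_mul (div_ne_zero (neg_ne_zero.2 hε.ne') hc) (div_ne_zero (by linarith) hε.ne')]
  congr 1
  field_simp
  ring

theorem tendsto_pvTrunc_of_eqOn {f g : ℝ → ℝ} {c d x0 k : ℝ} (hc : c < x0) (hd : x0 < d)
    (hg : IntervalIntegrable g volume c d)
    (hf : ∀ x ∈ Icc c d, x ≠ x0 → f x = g x + k * (x - x0)⁻¹) :
    Tendsto (pvTrunc f c d x0) (𝓝[>] 0)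
      (𝓝 ((∫ x in c..d, g x) + k * Real.log ((d - x0) / (x0 - c)))) := by
  have piece : ∀ u v, c ≤ u → u ≤ v → v ≤ d → x0 ∉ Icc u v →
      ∫ x in u..v, f x = (∫ x in u..v, g x) + k * ∫ x in u..v, (x - x0)⁻¹ := by
    intro u v hcu huv hvd hx0
    rw [← uIcc_of_le huv] at hx0
    have hsub : uIcc u v ⊆ uIcc c d := by
      rw [uIcc_of_le huv, uIcc_of_le (hc.trans hd).le]; exact Icc_subset_Icc hcu hvd
    have hinv : IntervalIntegrable (fun x => (x - x0)⁻¹) volume u v :=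
      (ContinuousOn.inv₀ (by fun_prop) fun x hx => sub_ne_zero.2 (ne_of_mem_of_not_mem hx hx0)
        ).intervalIntegrable
    rw [← intervalIntegral.integral_const_mul,
      ← integral_add (hg.mono_set hsub) (hinv.const_mul k)]
    refine integral_congr fun x hx => hf x ?_ (ne_of_mem_of_not_mem hx hx0)
    rw [← uIcc_of_le (hc.trans hd).le]
    exact hsub hx
  refine ((tendsto_pvTrunc_of_intervalIntegrable hg hc hd).add_const _).congr' ?_
  filter_upwards [Ioo_mem_nhdsGT (lt_min (sub_pos.2 hc) (sub_pos.2 hd))] with ε ⟨hε, hεδ⟩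
  have hεc : ε < x0 - c := hεδ.trans_le (min_le_left _ _)
  have hεd : ε < d - x0 := hεδ.trans_le (min_le_right _ _)
  rw [← pvTrunc_inv_sub hε hεc hεd, pvTrunc, pvTrunc, pvTrunc,
    piece c (x0 - ε) le_rfl (by linarith) (by linarith) (fun h => by linarith [h.2]),
    piece (x0 + ε) d (by linarith) (by linarith) le_rfl (fun h => by linarith [h.1])]
  ring

theorem Finset.prod_Icc_one_two_mul {M : Type*} [CommMonoid M] (f : ℕ → M) (n : ℕ) :
    ∏ i ∈ Finset.Icc 1 (2 * n), f i
      = ∏ k ∈ Finset.range n, (f (2 * k + 1) * f (2 * k + 2)) := by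
  induction n with
  | zero => simp
  | succ n ih =>
    rw [show 2 * (n + 1) = 2 * n + 1 + 1 by ring, Finset.prod_Icc_succ_top (by omega),
      Finset.prod_Icc_succ_top (by omega), Finset.prod_range_succ, ← ih, mul_assoc]

theorem Polynomial.eval_C_add_X_sub_C_mul_div {K : Type*} [Field K] {x x0 : K} (hx : x ≠ x0)
    (c : K) (q : K[X]) :
    (C c + (X - C x0) * q).eval x / (x - x0) = c * (x - x0)⁻¹ + q.eval x := by
  have : x - x0 ≠ 0 := sub_ne_zero.2 hx
  simp only [eval_add, eval_C, eval_mul, eval_sub, eval_X]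
  field_simp

theorem Polynomial.natDegree_C_add_X_sub_C_mul_le {R : Type*} [CommRing R] [Nontrivial R]
    {c x0 : R} {q : R[X]} {n : ℕ} (hq : q ∈ degreeLT R n) :
    (C c + (X - C x0) * q).natDegree ≤ n := by
  rcases eq_or_ne q 0 with rfl | hq0
  · simp
  have := (natDegree_lt_iff_degree_lt hq0).2 (mem_degreeLT.1 hq)
  refine (natDegree_add_le _ _).trans (max_le (by simp) (natDegree_mul_le.trans ?_))
  rw [natDegree_X_sub_C]
  omega

theorem Polynomial.divByMonic_X_sub_C_mem_degreeLT {R : Type*} [CommRing R] [Nontrivial R]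
    {r : R[X]} {n : ℕ} (hr : r.natDegree ≤ n) (x0 : R) : r /ₘ (X - C x0) ∈ degreeLT R n := by
  rcases eq_or_ne r 0 with rfl | hr0
  · rw [zero_divByMonic]
    exact zero_mem _
  have hlt := degree_divByMonic_lt r (X - C x0) hr0 (by rw [degree_X_sub_C]; exact zero_lt_one)
  exact mem_degreeLT.2 (hlt.trans_le (degree_le_of_natDegree_le hr))

namespace FiniteGap

noncomputable def H (l : ℕ) (a : ℕ → ℝ) (x : ℝ) : ℝ := ∏ i ∈ Finset.Icc 1 (2 * l), (x - a i)

variable {l : ℕ} {a : ℕ → ℝ} {j0 : ℕ} {x0 : ℝ}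

@[fun_prop]
theorem continuous_H : Continuous (H l a) := by
  unfold H; fun_prop

theorem differentiable_H : Differentiable ℝ (H l a) := by
  unfold H; fun_prop

theorem gap_lt_gap (ha : StrictMonoOn a (Icc 1 (2 * l))) {j j' : ℕ} (hj : 1 ≤ j) (hjj' : j < j')
    (hj' : j' < l) : a (2 * j + 1) < a (2 * j') :=
  ha ⟨by omega, by omega⟩ ⟨by omega, by omega⟩ (by omega)

theorem gap_endpoints_lt (ha : StrictMonoOn a (Icc 1 (2 * l))) {j : ℕ} (hj : 1 ≤ j)
    (hjl : j < l) : a (2 * j) < a (2 * j + 1) :=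
  ha ⟨by omega, by omega⟩ ⟨by omega, by omega⟩ (by omega)

theorem H_pos (ha : StrictMonoOn a (Icc 1 (2 * l))) {j : ℕ} (hj : 1 ≤ j) (hjl : j < l) {x : ℝ}
    (hx : x ∈ Ioo (a (2 * j)) (a (2 * j + 1))) : 0 < H l a x := by
  rw [H, Finset.prod_Icc_one_two_mul]
  refine Finset.prod_pos fun k hk => ?_
  rw [Finset.mem_range] at hk
  have hpair : a (2 * k + 1) < a (2 * k + 2) :=
    ha ⟨by omega, by omega⟩ ⟨by omega, by omega⟩ (by omega)
  rcases lt_or_ge k j with hkj | hkj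
  · have : a (2 * k + 2) ≤ a (2 * j) :=
      ha.monotoneOn ⟨by omega, by omega⟩ ⟨by omega, by omega⟩ (by omega)
    exact mul_pos (by linarith [hx.1]) (by linarith [hx.1])
  · have : a (2 * j + 1) ≤ a (2 * k + 1) :=
      ha.monotoneOn ⟨by omega, by omega⟩ ⟨by omega, by omega⟩ (by omega)
    exact mul_pos_of_neg_of_neg (by linarith [hx.2]) (by linarith [hx.2])

theorem exists_mul_le_H (ha : StrictMonoOn a (Icc 1 (2 * l))) {j : ℕ} (hj : 1 ≤ j)
    (hjl : j < l) :
    ∃ m > 0, ∀ x ∈ Ioo (a (2 * j)) (a (2 * j + 1)),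
      m * ((x - a (2 * j)) * (a (2 * j + 1) - x)) ≤ H l a x := by
  set c := a (2 * j)
  set d := a (2 * j + 1)
  set s := ((Finset.Icc 1 (2 * l)).erase (2 * j)).erase (2 * j + 1)
  set P : ℝ → ℝ := fun x => ∏ i ∈ s, (x - a i)
  have hsplit : ∀ x, H l a x = (x - c) * ((x - d) * P x) := fun x => by
    have h₁ : 2 * j ∈ Finset.Icc 1 (2 * l) := Finset.mem_Icc.2 ⟨by omega, by omega⟩
    have h₂ : 2 * j + 1 ∈ (Finset.Icc 1 (2 * l)).erase (2 * j) :=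
      Finset.mem_erase.2 ⟨by omega, Finset.mem_Icc.2 ⟨by omega, by omega⟩⟩
    rw [H, ← Finset.mul_prod_erase _ _ h₁, ← Finset.mul_prod_erase _ _ h₂]
  have hP : ∀ x ∈ Icc c d, P x ≠ 0 := fun x hx => Finset.prod_ne_zero_iff.2 fun i hi => by
    simp only [s, Finset.mem_erase, Finset.mem_Icc] at hi
    rcases lt_or_gt_of_ne hi.2.1 with hi' | hi'
    · have : a i < c := ha ⟨by omega, by omega⟩ ⟨by omega, by omega⟩ hi'
      linarith [hx.1]
    · have : d < a i := ha ⟨by omega, by omega⟩ ⟨by omega, by omega⟩ (by omega)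
      linarith [hx.2]
  obtain ⟨y, hy, hmin⟩ := isCompact_Icc.exists_isMinOn
    (nonempty_Icc.2 (gap_endpoints_lt ha hj hjl).le)
    (by fun_prop : Continuous fun x => |P x|).continuousOn
  refine ⟨|P y|, abs_pos.2 (hP y hy), fun x hx => ?_⟩
  have habs : H l a x = (x - c) * (d - x) * |P x| := by
    rw [← abs_of_pos (H_pos ha hj hjl hx), hsplit, abs_mul, abs_mul, abs_of_pos (sub_pos.2 hx.1),
      abs_of_neg (sub_neg.2 hx.2)]
    ring
  rw [habs, mul_comm]
  exact mul_le_mul_of_nonneg_left (hmin (Ioo_subset_Icc_self hx))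
    (mul_nonneg (sub_pos.2 hx.1).le (sub_pos.2 hx.2).le)

theorem intervalIntegrable_inv_sqrt_H (ha : StrictMonoOn a (Icc 1 (2 * l))) {j : ℕ} (hj : 1 ≤ j)
    (hjl : j < l) :
    IntervalIntegrable (fun x => (√(H l a x))⁻¹) volume (a (2 * j)) (a (2 * j + 1)) := by
  obtain ⟨m, hm, hle⟩ := exists_mul_le_H ha hj hjl
  exact intervalIntegrable_inv_sqrt_of_mul_le (gap_endpoints_lt ha hj hjl).le continuous_H hm hle

theorem intervalIntegrable_dslope_inv_sqrt_H (ha : StrictMonoOn a (Icc 1 (2 * l))) {j : ℕ}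
    (hj : 1 ≤ j) (hjl : j < l) (hx0 : x0 ∈ Ioo (a (2 * j)) (a (2 * j + 1))) :
    IntervalIntegrable (dslope (fun x => (√(H l a x))⁻¹) x0) volume
      (a (2 * j)) (a (2 * j + 1)) := by
  have hs0 : 0 < √(H l a x0) := Real.sqrt_pos.2 (H_pos ha hj hjl hx0)
  have hslope : Continuous (dslope (H l a) x0) := continuousOn_univ.1 <|
    (continuousOn_dslope univ_mem).2 ⟨continuous_H.continuousOn, differentiable_H x0⟩
  have hg : ContinuousOn
      (fun x => -(dslope (H l a) x0 x / (√(H l a x0) * (√(H l a x0) + √(H l a x)))))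
      (uIcc (a (2 * j)) (a (2 * j + 1))) :=
    (hslope.continuousOn.div (by fun_prop) fun x _ =>
      (mul_pos hs0 (add_pos_of_pos_of_nonneg hs0 (Real.sqrt_nonneg _))).ne').neg
  refine ((intervalIntegrable_inv_sqrt_H ha hj hjl).continuousOn_mul hg).congr_ae ?_
  rw [uIoc_of_le (gap_endpoints_lt ha hj hjl).le]
  filter_upwards [ae_restrict_mem measurableSet_Ioc, ae_restrict_of_ae (Measure.ae_ne volume x0),
    ae_restrict_of_ae (Measure.ae_ne volume (a (2 * j + 1)))] with x hx hxx0 hxd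
  exact (dslope_inv_sqrt hxx0 (H_pos ha hj hjl hx0)
    (H_pos ha hj hjl ⟨hx.1, lt_of_le_of_ne hx.2 hxd⟩)).symm

theorem eq_zero_of_integral_gap_eq_zero (ha : StrictMonoOn a (Icc 1 (2 * l))) {q : ℝ[X]}
    (hq : q ∈ degreeLT ℝ (l - 1))
    (h : ∀ j ∈ Finset.Icc 1 (l - 1),
      ∫ x in a (2 * j)..a (2 * j + 1), q.eval x * (√(H l a x))⁻¹ = 0) : q = 0 := by
  have hroot : ∀ j : Finset.Icc 1 (l - 1),
      ∃ z ∈ Ioo (a (2 * j)) (a (2 * j + 1)), q.eval z = 0 := by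
    rintro ⟨j, hj⟩
    obtain ⟨hj1, hjl⟩ : 1 ≤ j ∧ j < l := by rw [Finset.mem_Icc] at hj; omega
    exact exists_mem_Ioo_eq_zero_of_integral_mul_eq_zero (gap_endpoints_lt ha hj1 hjl)
      q.continuous.continuousOn (fun x hx => inv_pos.2 (Real.sqrt_pos.2 (H_pos ha hj1 hjl hx)))
      ((intervalIntegrable_inv_sqrt_H ha hj1 hjl).continuousOn_mul q.continuous.continuousOn)
      (h j hj)
  choose z hz hzq using hroot
  have hz_mono : StrictMono z := by
    rintro ⟨j, hj⟩ ⟨j', hj'⟩ (hjj' : j < j')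
    calc z ⟨j, hj⟩ < a (2 * j + 1) := (hz ⟨j, hj⟩).2
      _ < a (2 * j') := gap_lt_gap ha (Finset.mem_Icc.1 hj).1 hjj' (by grind)
      _ < z ⟨j', hj'⟩ := (hz ⟨j', hj'⟩).1
  by_contra hq0
  refine hq0 (eq_zero_of_natDegree_lt_card_of_eval_eq_zero q hz_mono.injective hzq ?_)
  rw [Fintype.card_coe, Nat.card_Icc]
  have := (natDegree_lt_iff_degree_lt hq0).2 (mem_degreeLT.1 hq)
  omega

theorem existsUnique_integral_gap_eq (ha : StrictMonoOn a (Icc 1 (2 * l))) (t : ℕ → ℝ) :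
    ∃! q : ℝ[X], q ∈ degreeLT ℝ (l - 1) ∧ ∀ j ∈ Finset.Icc 1 (l - 1),
      ∫ x in a (2 * j)..a (2 * j + 1), q.eval x * (√(H l a x))⁻¹ = t j := by
  have hint : ∀ (p : ℝ[X]) (j : Finset.Icc 1 (l - 1)), IntervalIntegrable
      (fun x => p.eval x * (√(H l a x))⁻¹) volume (a (2 * j)) (a (2 * j + 1)) := by
    rintro p ⟨j, hj⟩
    rw [Finset.mem_Icc] at hj
    exact (intervalIntegrable_inv_sqrt_H ha hj.1 (by omega)).continuousOn_mul
      p.continuous.continuousOn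
  let M : degreeLT ℝ (l - 1) →ₗ[ℝ] (Finset.Icc 1 (l - 1) → ℝ) :=
    { toFun := fun q j => ∫ x in a (2 * j)..a (2 * j + 1), (q : ℝ[X]).eval x * (√(H l a x))⁻¹
      map_add' := fun p q => funext fun j => by
        simp only [Submodule.coe_add, eval_add, add_mul]
        exact integral_add (hint p j) (hint q j)
      map_smul' := fun c p => funext fun j => by
        simp only [Submodule.coe_smul, eval_smul, smul_eq_mul, mul_assoc,
          intervalIntegral.integral_const_mul, RingHom.id_apply, Pi.smul_apply] }
  have hM : Function.Injective M := (injective_iff_map_eq_zero M).2 fun q hq =>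
    Subtype.ext (eq_zero_of_integral_gap_eq_zero ha q.2 fun j hj => congrFun hq ⟨j, hj⟩)
  have := LinearEquiv.finiteDimensional (degreeLTEquiv ℝ (l - 1)).symm
  have hrank : Module.finrank ℝ (degreeLT ℝ (l - 1))
      = Module.finrank ℝ (Finset.Icc 1 (l - 1) → ℝ) := by
    rw [(degreeLTEquiv ℝ (l - 1)).finrank_eq]
    simp
  obtain ⟨q, hq⟩ := (LinearMap.injective_iff_surjective_of_finrank_eq_finrank hrank).1 hM
    fun j => t j
  refine ⟨q, ⟨q.2, fun j hj => congrFun hq ⟨j, hj⟩⟩, fun p ⟨hp, hpt⟩ => ?_⟩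
  exact congrArg Subtype.val
    (@hM ⟨p, hp⟩ q (funext fun j => (hpt j j.2).trans (congrFun hq j).symm))

theorem notMem_gap (ha : StrictMonoOn a (Icc 1 (2 * l))) {j : ℕ} (hj : 1 ≤ j) (hjl : j < l)
    (hj0 : 1 ≤ j0) (hj0l : j0 < l) (hx0 : x0 ∈ Ioo (a (2 * j0)) (a (2 * j0 + 1)))
    (hne : j ≠ j0) : x0 ∉ Icc (a (2 * j)) (a (2 * j + 1)) := fun hx => by
  rcases lt_or_gt_of_ne hne with h | h
  · linarith [gap_lt_gap ha hj h hj0l, hx.2, hx0.1]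
  · linarith [gap_lt_gap ha hj0 h hjl, hx.1, hx0.2]

/-- The `j`-th gap condition evaluated at the constant polynomial `1`. On the gap `j0`, which
contains `x0`, this is the principal value of `∫ 1 / ((x - x0) √H)`, split into the integral of
the difference quotient of `1 / √H` at `x0` and `1 / √H(x0)` times `p.v. ∫ 1 / (x - x0)`. -/
noncomputable def gapCauchyIntegral (l : ℕ) (a : ℕ → ℝ) (j0 : ℕ) (x0 : ℝ) (j : ℕ) : ℝ :=
  if j = j0 then
    (∫ x in a (2 * j)..a (2 * j + 1), dslope (fun x => (√(H l a x))⁻¹) x0 x) +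
      (√(H l a x0))⁻¹ * Real.log ((a (2 * j + 1) - x0) / (x0 - a (2 * j)))
  else ∫ x in a (2 * j)..a (2 * j + 1), (x - x0)⁻¹ * (√(H l a x))⁻¹

def SolvesGapConditions (l : ℕ) (a : ℕ → ℝ) (j0 : ℕ) (x0 : ℝ) (r : ℝ[X]) : Prop :=
  (∀ j ∈ Finset.Icc 1 (l - 1), j ≠ j0 →
    ∫ x in a (2 * j)..a (2 * j + 1), r.eval x / (x - x0) / √(H l a x) = 0) ∧
  Tendsto (pvTrunc (fun x => r.eval x / (x - x0) / √(H l a x)) (a (2 * j0)) (a (2 * j0 + 1))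
    x0) (𝓝[>] 0) (𝓝 0)

theorem integral_gap_C_add_X_sub_C_mul (ha : StrictMonoOn a (Icc 1 (2 * l))) {j : ℕ}
    (hj : 1 ≤ j) (hjl : j < l) (hx0 : x0 ∉ Icc (a (2 * j)) (a (2 * j + 1))) (c : ℝ) (q : ℝ[X]) :
    ∫ x in a (2 * j)..a (2 * j + 1), (C c + (X - C x0) * q).eval x / (x - x0) / √(H l a x)
      = c * (∫ x in a (2 * j)..a (2 * j + 1), (x - x0)⁻¹ * (√(H l a x))⁻¹)
        + ∫ x in a (2 * j)..a (2 * j + 1), q.eval x * (√(H l a x))⁻¹ := by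
  rw [← uIcc_of_le (gap_endpoints_lt ha hj hjl).le] at hx0
  have hw := intervalIntegrable_inv_sqrt_H ha hj hjl
  have hinv : ContinuousOn (fun x => (x - x0)⁻¹) (uIcc (a (2 * j)) (a (2 * j + 1))) :=
    ContinuousOn.inv₀ (by fun_prop) fun x hx => sub_ne_zero.2 (ne_of_mem_of_not_mem hx hx0)
  rw [← intervalIntegral.integral_const_mul,
    ← integral_add ((hw.continuousOn_mul hinv).const_mul c)
      (hw.continuousOn_mul q.continuous.continuousOn)]
  refine integral_congr fun x hx => ?_
  simp only [div_eq_mul_inv _ (√_), eval_C_add_X_sub_C_mul_div (ne_of_mem_of_not_mem hx hx0)]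
  ring

theorem tendsto_pvTrunc_C_add_X_sub_C_mul (ha : StrictMonoOn a (Icc 1 (2 * l))) (hj0 : 1 ≤ j0)
    (hj0l : j0 < l) (hx0 : x0 ∈ Ioo (a (2 * j0)) (a (2 * j0 + 1))) (c : ℝ) (q : ℝ[X]) :
    Tendsto (pvTrunc (fun x => (C c + (X - C x0) * q).eval x / (x - x0) / √(H l a x))
      (a (2 * j0)) (a (2 * j0 + 1)) x0) (𝓝[>] 0)
      (𝓝 (c * gapCauchyIntegral l a j0 x0 j0
        + ∫ x in a (2 * j0)..a (2 * j0 + 1), q.eval x * (√(H l a x))⁻¹)) := by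
  have hslope := (intervalIntegrable_dslope_inv_sqrt_H ha hj0 hj0l hx0).const_mul c
  have hq :=
    (intervalIntegrable_inv_sqrt_H ha hj0 hj0l).continuousOn_mul q.continuous.continuousOn
  convert tendsto_pvTrunc_of_eqOn hx0.1 hx0.2 (hslope.add hq) (k := c * (√(H l a x0))⁻¹)
    fun x _ hx => ?_ using 2
  · rw [gapCauchyIntegral, if_pos rfl, integral_add hslope hq, intervalIntegral.integral_const_mul]
    ring
  · rw [div_eq_mul_inv _ (√_), eval_C_add_X_sub_C_mul_div hx, dslope_of_ne _ hx, slope_def_field]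
    have : x - x0 ≠ 0 := sub_ne_zero.2 hx
    field_simp
    ring

theorem solvesGapConditions_C_add_X_sub_C_mul_iff (ha : StrictMonoOn a (Icc 1 (2 * l)))
    (hj0 : 1 ≤ j0) (hj0l : j0 < l) (hx0 : x0 ∈ Ioo (a (2 * j0)) (a (2 * j0 + 1))) (c : ℝ)
    (q : ℝ[X]) :
    SolvesGapConditions l a j0 x0 (C c + (X - C x0) * q) ↔ ∀ j ∈ Finset.Icc 1 (l - 1),
      ∫ x in a (2 * j)..a (2 * j + 1), q.eval x * (√(H l a x))⁻¹
        = -(c * gapCauchyIntegral l a j0 x0 j) := by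
  have hgap : ∀ j ∈ Finset.Icc 1 (l - 1), j ≠ j0 →
      ((∫ x in a (2 * j)..a (2 * j + 1),
          (C c + (X - C x0) * q).eval x / (x - x0) / √(H l a x)) = 0
        ↔ ∫ x in a (2 * j)..a (2 * j + 1), q.eval x * (√(H l a x))⁻¹
          = -(c * gapCauchyIntegral l a j0 x0 j)) := fun j hj hne => by
    obtain ⟨hj1, hjl⟩ : 1 ≤ j ∧ j < l := by rw [Finset.mem_Icc] at hj; omega
    rw [integral_gap_C_add_X_sub_C_mul ha hj1 hjl (notMem_gap ha hj1 hjl hj0 hj0l hx0 hne),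
      gapCauchyIntegral, if_neg hne]
    constructor <;> intro h <;> linarith
  have hlim := tendsto_pvTrunc_C_add_X_sub_C_mul ha hj0 hj0l hx0 c q
  have hj0mem : j0 ∈ Finset.Icc 1 (l - 1) := Finset.mem_Icc.2 ⟨hj0, by omega⟩
  constructor
  · rintro ⟨hgaps, hpv⟩ j hj
    by_cases hne : j = j0
    · subst hne
      linarith [tendsto_nhds_unique hlim hpv]
    · exact (hgap j hj hne).1 (hgaps j hj hne)
  · intro h
    refine ⟨fun j hj hne => (hgap j hj hne).2 (h j hj), ?_⟩
    rwa [h j0 hj0mem, add_neg_cancel] at hlim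

end FiniteGap

open FiniteGap

theorem r_x0_exists_unique_general
    (l : ℕ) (a : ℕ → ℝ)
    (ha : ∀ i, 1 ≤ i → i < 2 * l → a i < a (i + 1))
    (j0 : ℕ) (hj0 : j0 ∈ Finset.Icc 1 (l - 1))
    (x0 : ℝ) (hx0 : x0 ∈ Set.Ioo (a (2 * j0)) (a (2 * j0 + 1))) :
    ∃! r : Polynomial ℝ, r.natDegree ≤ l - 1 ∧
      r.eval x0 = - Real.sqrt (∏ i ∈ Finset.Icc 1 (2 * l), (x0 - a i)) ∧
      (∀ j ∈ Finset.Icc 1 (l - 1), j ≠ j0 →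
        ∫ ξ in (a (2 * j))..(a (2 * j + 1)),
          r.eval ξ / (ξ - x0) / Real.sqrt (∏ i ∈ Finset.Icc 1 (2 * l), (ξ - a i)) = 0) ∧
      Tendsto (fun ε : ℝ =>
          (∫ ξ in (a (2 * j0))..(x0 - ε),
            r.eval ξ / (ξ - x0) / Real.sqrt (∏ i ∈ Finset.Icc 1 (2 * l), (ξ - a i))) +
          ∫ ξ in (x0 + ε)..(a (2 * j0 + 1)),
            r.eval ξ / (ξ - x0) / Real.sqrt (∏ i ∈ Finset.Icc 1 (2 * l), (ξ - a i)))
        (nhdsWithin 0 (Set.Ioi 0)) (nhds 0) := by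
  obtain ⟨hj0₁, hj0l⟩ : 1 ≤ j0 ∧ j0 < l := by rw [Finset.mem_Icc] at hj0; omega
  have hmono : StrictMonoOn a (Icc 1 (2 * l)) :=
    strictMonoOn_of_lt_add_one ordConnected_Icc fun i _ hi hi' => ha i hi.1 (by grind)
  set c := -√(H l a x0)
  obtain ⟨q, ⟨hq, hqc⟩, hq_unique⟩ :=
    existsUnique_integral_gap_eq hmono fun j => -(c * gapCauchyIntegral l a j0 x0 j)
  have hsolve := solvesGapConditions_C_add_X_sub_C_mul_iff hmono hj0₁ hj0l hx0 c
  refine ⟨C c + (X - C x0) * q,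
    ⟨natDegree_C_add_X_sub_C_mul_le hq, by simp [c, H], (hsolve q).2 hqc⟩, ?_⟩
  rintro r ⟨hdeg, hval : r.eval x0 = c, hr⟩
  have hr_eq : r = C c + (X - C x0) * (r /ₘ (X - C x0)) := by
    rw [← hval, ← modByMonic_X_sub_C_eq_C_eval, modByMonic_add_div r (X - C x0)]
  rw [hr_eq] at hr ⊢
  rw [hq_unique _ ⟨divByMonic_X_sub_C_mem_degreeLT hdeg x0, (hsolve _).1 hr⟩]

theorem r_x0_exists_unique
    (l : ℕ) (hl : 1 ≤ l) (a : ℕ → ℝ)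
    (ha : ∀ i, 1 ≤ i → i < 2 * l → a i < a (i + 1))
    (j0 : ℕ) (hj0 : j0 ∈ Finset.Icc 1 (l - 1))
    (x0 : ℝ) (hx0 : x0 ∈ Set.Ioo (a (2 * j0)) (a (2 * j0 + 1))) :
    ∃! r : Polynomial ℝ, r.natDegree ≤ l - 1 ∧
      r.eval x0 = - Real.sqrt (∏ i ∈ Finset.Icc 1 (2 * l), (x0 - a i)) ∧
      (∀ j ∈ Finset.Icc 1 (l - 1), j ≠ j0 →
        ∫ ξ in (a (2 * j))..(a (2 * j + 1)),
          r.eval ξ / (ξ - x0) / Real.sqrt (∏ i ∈ Finset.Icc 1 (2 * l), (ξ - a i)) = 0) ∧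
      Tendsto (fun ε : ℝ =>
          (∫ ξ in (a (2 * j0))..(x0 - ε),
            r.eval ξ / (ξ - x0) / Real.sqrt (∏ i ∈ Finset.Icc 1 (2 * l), (ξ - a i))) +
          ∫ ξ in (x0 + ε)..(a (2 * j0 + 1)),
            r.eval ξ / (ξ - x0) / Real.sqrt (∏ i ∈ Finset.Icc 1 (2 * l), (ξ - a i)))
        (nhdsWithin 0 (Set.Ioi 0)) (nhds 0) :=
  r_x0_exists_unique_general l a ha j0 hj0 x0 hx0
end

section
/- Let $p$ and $q$ be real polynomials with all zeros real and simple, such that the zeros of $p$ and $q$ strictly interlace (between any two consecutive zeros of $p$ there is exactly one zero of $q$ and vice versa, and $\deg p = \deg q + 1$). Let $A$ and $B$ be real polynomials with $\deg A, \deg B \le \kappa - 1$ and consider $F = A p - B q$. Then between any two consecutive zeros of $q$ there is at least one zero of $F$ or of $A$. -/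
open Polynomial Set

lemma poly_ivt_aux (g : Polynomial ℝ) (x1 x2 : ℝ) (h : x1 < x2)
    (hs : g.eval x1 * g.eval x2 < 0) : ∃ y ∈ Set.Ioo x1 x2, g.eval y = 0 := by
  have hc : ContinuousOn (fun x => g.eval x) (Set.Icc x1 x2) :=
    g.continuous.continuousOn
  have h1 : g.eval x1 ≠ 0 := by
    intro h0; rw [h0] at hs; simp at hs
  rcases lt_or_gt_of_ne h1 with h1 | h1
  · have h2 : 0 < g.eval x2 := by nlinarith
    obtain ⟨y, hy, hy0⟩ := intermediate_value_Ioo h.le hc ⟨h1, h2⟩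
    exact ⟨y, hy, hy0⟩
  · have h2 : g.eval x2 < 0 := by nlinarith
    obtain ⟨y, hy, hy0⟩ := intermediate_value_Ioo' h.le hc ⟨h2, h1⟩
    exact ⟨y, hy, hy0⟩

theorem zero_of_F_or_A_between_zeros_of_q
    (p q A B : Polynomial ℝ) (κ : ℕ)
    (hpreal : p.roots.card = p.natDegree) (hpsimple : p.roots.Nodup)
    (hqreal : q.roots.card = q.natDegree) (hqsimple : q.roots.Nodup)
    (hdeg : p.natDegree = q.natDegree + 1)
    (hinter1 : ∀ x1 x2 : ℝ, x1 < x2 → p.eval x1 = 0 → p.eval x2 = 0 →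
      (∀ y ∈ Set.Ioo x1 x2, p.eval y ≠ 0) →
      ∃! y, y ∈ Set.Ioo x1 x2 ∧ q.eval y = 0)
    (hinter2 : ∀ x1 x2 : ℝ, x1 < x2 → q.eval x1 = 0 → q.eval x2 = 0 →
      (∀ y ∈ Set.Ioo x1 x2, q.eval y ≠ 0) →
      ∃! y, y ∈ Set.Ioo x1 x2 ∧ p.eval y = 0)
    (hA : A.natDegree ≤ κ - 1) (hB : B.natDegree ≤ κ - 1) :
    ∀ x1 x2 : ℝ, x1 < x2 → q.eval x1 = 0 → q.eval x2 = 0 →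
      (∀ y ∈ Set.Ioo x1 x2, q.eval y ≠ 0) →
      ∃ y ∈ Set.Icc x1 x2, (A * p - B * q).eval y = 0 ∨ A.eval y = 0 := by
  intro x1 x2 hx hq1 hq2 hqne
  -- trivial cases: F vanishes at an endpoint if p does (since q does)
  by_cases hp1 : p.eval x1 = 0
  · exact ⟨x1, ⟨le_refl _, hx.le⟩, Or.inl (by simp [hp1, hq1])⟩
  by_cases hp2 : p.eval x2 = 0
  · exact ⟨x2, ⟨hx.le, le_refl _⟩, Or.inl (by simp [hp2, hq2])⟩
  by_cases hA1 : A.eval x1 = 0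
  · exact ⟨x1, ⟨le_refl _, hx.le⟩, Or.inr hA1⟩
  by_cases hA2 : A.eval x2 = 0
  · exact ⟨x2, ⟨hx.le, le_refl _⟩, Or.inr hA2⟩
  -- p is nonzero
  have hp0 : p ≠ 0 := fun h => by simp [h] at hp1
  -- unique zero y0 of p in (x1, x2)
  obtain ⟨y0, ⟨hy0mem, hy0p⟩, hy0uniq⟩ := hinter2 x1 x2 hx hq1 hq2 hqne
  -- factor p = (X - y0) * r, with r(y0) ≠ 0 since root is simple
  obtain ⟨r, hr⟩ := dvd_iff_isRoot.mpr hy0p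
  have hry0 : r.eval y0 ≠ 0 := by
    intro h0
    obtain ⟨s, hs⟩ := dvd_iff_isRoot.mpr h0
    have hdvd : (X - C y0) ^ 2 ∣ p := ⟨s, by rw [hr, hs]; ring⟩
    have h2 : 2 ≤ rootMultiplicity y0 p :=
      (le_rootMultiplicity_iff hp0).mpr hdvd
    have hcount : p.roots.count y0 = rootMultiplicity y0 p := count_roots p
    have hle1 : p.roots.count y0 ≤ 1 :=
      Multiset.nodup_iff_count_le_one.mp hpsimple y0
    omega
  -- r has no zeros on [x1, x2]
  have hrne : ∀ z ∈ Set.Icc x1 x2, r.eval z ≠ 0 := by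
    intro z hz h0
    have hpz : p.eval z = 0 := by rw [hr]; simp [h0]
    rcases eq_or_lt_of_le hz.1 with h | h
    · exact hp1 (h ▸ hpz)
    rcases eq_or_lt_of_le hz.2 with h' | h'
    · exact hp2 (h' ▸ hpz)
    have : z = y0 := hy0uniq z ⟨⟨h, h'⟩, hpz⟩
    exact hry0 (this ▸ h0)
  -- hence r has constant sign, so r(x1)*r(x2) > 0
  have hrpos : 0 < r.eval x1 * r.eval x2 := by
    rcases lt_trichotomy (r.eval x1 * r.eval x2) 0 with h | h | h
    · obtain ⟨y, hy, hy0⟩ := poly_ivt_aux r x1 x2 hx h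
      exact absurd hy0 (hrne y ⟨hy.1.le, hy.2.le⟩)
    · rcases mul_eq_zero.mp h with h | h
      · exact absurd h (hrne x1 ⟨le_refl _, hx.le⟩)
      · exact absurd h (hrne x2 ⟨hx.le, le_refl _⟩)
    · exact h
  -- p(x1)*p(x2) < 0
  have hpprod : p.eval x1 * p.eval x2 < 0 := by
    have e1 : p.eval x1 = (x1 - y0) * r.eval x1 := by rw [hr]; simp
    have e2 : p.eval x2 = (x2 - y0) * r.eval x2 := by rw [hr]; simp
    have h1 : x1 - y0 < 0 := by linarith [hy0mem.1]
    have h2 : 0 < x2 - y0 := by linarith [hy0mem.2]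
    rw [e1, e2]
    nlinarith [mul_neg_of_neg_of_pos (mul_neg_of_neg_of_pos h1 h2) hrpos]
  -- case on sign of A(x1)*A(x2)
  rcases lt_trichotomy (A.eval x1 * A.eval x2) 0 with hAs | hAs | hAs
  · obtain ⟨y, hy, hy0⟩ := poly_ivt_aux A x1 x2 hx hAs
    exact ⟨y, ⟨hy.1.le, hy.2.le⟩, Or.inr hy0⟩
  · rcases mul_eq_zero.mp hAs with h | h
    · exact absurd h hA1
    · exact absurd h hA2
  · -- F(x1)*F(x2) < 0
    have hF : (A * p - B * q).eval x1 * (A * p - B * q).eval x2 < 0 := by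
      simp only [eval_sub, eval_mul, hq1, hq2, mul_zero, sub_zero]
      nlinarith
    obtain ⟨y, hy, hy0⟩ := poly_ivt_aux (A * p - B * q) x1 x2 hx hF
    exact ⟨y, ⟨hy.1.le, hy.2.le⟩, Or.inl hy0⟩
end
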